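/- arXiv:2412.16308 — 3 statements merged into one kernel-verified Lean document; each statement's English description precedes it below -/
import Mathlib

section
/- Let K be an algebraically closed field, n ≥ 1, f a nonzero Laurent polynomial in n variables over K, and p₁,…,p_r finitely many points of (Kˣ)ⁿ. Then there exists a nonzero Laurent polynomial h in n variables over K such that every t ∈ (Kˣ)ⁿ with h(t) ≠ 0 satisfies f(t·pᵢ) ≠ 0 for all i = 1,…,r, where t·pᵢ denotes the componentwise product. In particular there exists t ∈ (Kˣ)ⁿ with f(t·pᵢ) ≠ 0 for all i. -/
open scoped BigOperators

noncomputable section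

/-- The ring of Laurent polynomials in variables indexed by `σ` over `K`,
realized as the monoid algebra `K[x₁^{±1},…]` on the exponent group `σ → ℤ`. -/
abbrev LaurentPoly (K : Type*) [CommSemiring K] (σ : Type*) : Type _ :=
  AddMonoidAlgebra K (σ → ℤ)

variable {K : Type*} [Field K] {σ : Type*} [Fintype σ]

/-- `t ^ a = ∏ i, (t i) ^ (a i)` for a torus point `t ∈ (Kˣ)^σ` and `a ∈ ℤ^σ`. -/
def torusPow (t : σ → Kˣ) (a : σ → ℤ) : K :=
  ∏ i, ((t i ^ a i : Kˣ) : K)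

/-- Evaluation of a Laurent polynomial `f = ∑ a α_a x^a` at a point `t` of the
torus: `f(t) = ∑ a α_a t^a`. -/
def laurentEval (f : LaurentPoly K σ) (t : σ → Kˣ) : K :=
  f.coeff.sum fun a c => c * torusPow t a

/-- The twist `t*f = ∑ a α_a t^a x^a` of a Laurent polynomial by a torus point. -/
def laurentTwist (t : σ → Kˣ) (f : LaurentPoly K σ) : LaurentPoly K σ :=
  AddMonoidAlgebra.ofCoeff (f.coeff.sum fun a c => Finsupp.single a (c * torusPow t a))

/-- The height of a (prime) ideal: the supremum of lengths of chains of prime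
ideals strictly contained in it. -/
def idealHeight {R : Type*} [CommRing R] (P : Ideal R) : ℕ∞ :=
  Set.chainHeight {Q : Ideal R | Q.IsPrime ∧ Q < P} (· < ·)

/-- A family of Laurent polynomials meets properly if, for every subset `I` of
the index set, every minimal prime of the ideal generated by the corresponding
subfamily has height `#I`. -/
def MeetsProperly {k : ℕ} (g : Fin k → LaurentPoly K σ) : Prop :=
  ∀ I : Finset (Fin k), ∀ P ∈ (Ideal.span (g '' ↑I)).minimalPrimes,
    idealHeight P = I.card

/-! The product `h = ∏ᵢ pᵢ * f` of the twists works: `h(t) = ∏ᵢ f(t·pᵢ)`, and `h ≠ 0` because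
the Laurent polynomial ring is a domain. Over an infinite field the torus characters `t ↦ t ^ a`
are pairwise distinct, so by Dedekind's independence of characters a nonzero Laurent polynomial
does not vanish identically on the torus; this gives the point `t`. -/

theorem torusPow_ne_zero (t : σ → Kˣ) (a : σ → ℤ) : torusPow t a ≠ 0 := by
  simpa [torusPow] using Units.ne_zero (∏ i, t i ^ a i)

theorem torusPow_add (t : σ → Kˣ) (a b : σ → ℤ) :
    torusPow t (a + b) = torusPow t a * torusPow t b := by
  simp [torusPow, zpow_add, Finset.prod_mul_distrib]

theorem torusPow_mul (t p : σ → Kˣ) (a : σ → ℤ) :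
    torusPow (t * p) a = torusPow t a * torusPow p a := by
  simp [torusPow, mul_zpow, Finset.prod_mul_distrib]

theorem torusPow_mulSingle [DecidableEq σ] (i : σ) (s : Kˣ) (a : σ → ℤ) :
    torusPow (Pi.mulSingle i s) a = ((s ^ a i : Kˣ) : K) := by
  rw [torusPow, Finset.prod_eq_single i] <;> simp +contextual

def torusChar (a : σ → ℤ) : (σ → Kˣ) →* K where
  toFun t := torusPow t a
  map_one' := by simp [torusPow]
  map_mul' t p := torusPow_mul t p a

theorem eq_zero_of_forall_zpow_eq_one [Infinite K] {m : ℤ} (h : ∀ s : Kˣ, s ^ m = 1) :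
    m = 0 := by
  classical
  by_contra hm
  obtain ⟨x, hx⟩ :=
    Infinite.exists_notMem_finset (insert 0 (Polynomial.nthRoots m.natAbs (1 : K)).toFinset)
  simp only [Finset.mem_insert, Multiset.mem_toFinset, not_or,
    Polynomial.mem_nthRoots (Int.natAbs_pos.mpr hm)] at hx
  exact hx.2 (by simpa using congrArg Units.val (pow_natAbs_eq_one.mpr (h (Units.mk0 x hx.1))))

theorem torusChar_injective [Infinite K] :
    Function.Injective (torusChar : (σ → ℤ) → (σ → Kˣ) →* K) := by
  classical
  intro a b hab
  funext i
  refine sub_eq_zero.mp (eq_zero_of_forall_zpow_eq_one (K := K) fun s => ?_)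
  have := DFunLike.congr_fun hab (Pi.mulSingle i s)
  simp only [torusChar, MonoidHom.coe_mk, OneHom.coe_mk, torusPow_mulSingle, Units.val_inj] at this
  rw [zpow_sub, this, mul_inv_cancel]

theorem linearIndependent_torusPow [Infinite K] :
    LinearIndependent K fun (a : σ → ℤ) (t : σ → Kˣ) => torusPow t a :=
  (linearIndependent_monoidHom (σ → Kˣ) K).comp torusChar torusChar_injective

theorem laurentEval_eq_linearCombination (f : LaurentPoly K σ) :
    (fun t => laurentEval f t) =
      Finsupp.linearCombination K (fun (a : σ → ℤ) (t : σ → Kˣ) => torusPow t a) f.coeff := by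
  ext t
  simp [laurentEval, Finsupp.linearCombination_apply, Finsupp.sum]

theorem exists_laurentEval_ne_zero [Infinite K] {f : LaurentPoly K σ} (hf : f ≠ 0) :
    ∃ t, laurentEval f t ≠ 0 := by
  by_contra! hzero
  refine hf (AddMonoidAlgebra.coeff_eq_zero.mp (linearIndependent_torusPow ?_))
  rw [← laurentEval_eq_linearCombination, map_zero]
  exact funext hzero

def laurentEvalHom (t : σ → Kˣ) : LaurentPoly K σ →ₐ[K] K :=
  AddMonoidAlgebra.lift K K (σ → ℤ)
    { toFun a := torusPow t a.toAdd
      map_one' := by simp [torusPow]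
      map_mul' a b := torusPow_add t a.toAdd b.toAdd }

theorem laurentEvalHom_apply (t : σ → Kˣ) (f : LaurentPoly K σ) :
    laurentEvalHom t f = laurentEval f t := by
  simp [laurentEvalHom, AddMonoidAlgebra.lift_apply, laurentEval, smul_eq_mul]

theorem laurentEval_prod {ι : Type*} (s : Finset ι) (f : ι → LaurentPoly K σ) (t : σ → Kˣ) :
    laurentEval (∏ i ∈ s, f i) t = ∏ i ∈ s, laurentEval (f i) t := by
  simp only [← laurentEvalHom_apply, map_prod]

theorem laurentTwist_coeff (p : σ → Kˣ) (f : LaurentPoly K σ) (a : σ → ℤ) :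
    (laurentTwist p f).coeff a = f.coeff a * torusPow p a := by
  classical
  rw [laurentTwist, AddMonoidAlgebra.coeff_ofCoeff, Finsupp.sum_apply, Finsupp.sum_eq_single a]
  · simp
  · intro b _ hba
    simp [hba]
  · simp

theorem laurentTwist_ne_zero (p : σ → Kˣ) {f : LaurentPoly K σ} (hf : f ≠ 0) :
    laurentTwist p f ≠ 0 := by
  obtain ⟨a, ha⟩ := Finsupp.ne_iff.mp (mt AddMonoidAlgebra.coeff_eq_zero.mp hf)
  refine mt AddMonoidAlgebra.coeff_eq_zero.mpr (Finsupp.ne_iff.mpr ⟨a, ?_⟩)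
  simpa [laurentTwist_coeff] using And.intro ha (torusPow_ne_zero p a)

theorem laurentEval_laurentTwist (p t : σ → Kˣ) (f : LaurentPoly K σ) :
    laurentEval (laurentTwist p f) t = laurentEval f (t * p) := by
  have hsupp : (laurentTwist p f).coeff.support ⊆ f.coeff.support := fun a ha => by
    simp_all [laurentTwist_coeff]
  rw [laurentEval, Finsupp.sum_of_support_subset _ hsupp _ (by simp), laurentEval, Finsupp.sum]
  refine Finset.sum_congr rfl fun a _ => ?_
  rw [laurentTwist_coeff, torusPow_mul]
  ring

theorem generic_twist_avoids_finite_set_general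
    (K : Type*) [Field K] [IsAlgClosed K] (n : ℕ)
    (f : LaurentPoly K (Fin n)) (hf : f ≠ 0)
    (r : ℕ) (p : Fin r → Fin n → Kˣ) :
    (∃ h : LaurentPoly K (Fin n), h ≠ 0 ∧
      ∀ t : Fin n → Kˣ, laurentEval h t ≠ 0 →
        ∀ i : Fin r, laurentEval f (fun j => t j * p i j) ≠ 0) ∧
    ∃ t : Fin n → Kˣ, ∀ i : Fin r, laurentEval f (fun j => t j * p i j) ≠ 0 := by
  have hgood : ∀ t : Fin n → Kˣ, laurentEval (∏ i, laurentTwist (p i) f) t ≠ 0 →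
      ∀ i, laurentEval f (t * p i) ≠ 0 := by
    intro t ht i
    rw [laurentEval_prod] at ht
    simpa [laurentEval_laurentTwist] using Finset.prod_ne_zero_iff.mp ht i (Finset.mem_univ i)
  have hne : ∏ i, laurentTwist (p i) f ≠ 0 :=
    Finset.prod_ne_zero_iff.mpr fun i _ => laurentTwist_ne_zero (p i) hf
  obtain ⟨t, ht⟩ := exists_laurentEval_ne_zero hne
  exact ⟨⟨_, hne, hgood⟩, t, hgood t ht⟩

/-- Over an algebraically closed field, given a nonzero Laurent
polynomial `f` and finitely many torus points `p₁,…,p_r`, there is a nonzero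
Laurent polynomial `h` such that any torus point `t` with `h(t) ≠ 0` satisfies
`f(t·pᵢ) ≠ 0` for all `i`; in particular such a `t` exists. -/
theorem generic_twist_avoids_finite_set
    (K : Type*) [Field K] [IsAlgClosed K] (n : ℕ) (hn : 1 ≤ n)
    (f : LaurentPoly K (Fin n)) (hf : f ≠ 0)
    (r : ℕ) (p : Fin r → Fin n → Kˣ) :
    (∃ h : LaurentPoly K (Fin n), h ≠ 0 ∧
      ∀ t : Fin n → Kˣ, laurentEval h t ≠ 0 →
        ∀ i : Fin r, laurentEval f (fun j => t j * p i j) ≠ 0) ∧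
    ∃ t : Fin n → Kˣ, ∀ i : Fin r, laurentEval f (fun j => t j * p i j) ≠ 0 :=
  generic_twist_avoids_finite_set_general K n f hf r p
end
end

section
/- Let n ≥ 0 and let μ be an additive Haar measure on ℝⁿ (for instance the Lebesgue measure). For each i = 0,…,n let Q_i ⊂ ℝⁿ be a nonempty compact convex set, let (g_{i,j})_j be a sequence of continuous concave functions Q_i → ℝ, and let g_i : Q_i → ℝ be a concave function such that g_{i,j} → g_i uniformly on Q_i. For a nonempty subset I ⊆ {0,…,n} and functions h_i on Q_i, the sup-convolution ⊞_{i∈I} h_i is the function on the Minkowski sum ∑_{i∈I} Q_i given by (⊞_{i∈I} h_i)(x) = sup { ∑_{i∈I} h_i(y_i) : y_i ∈ Q_i for i ∈ I, ∑_{i∈I} y_i = x }, and the mixed integral is MI_μ(h₀,…,h_n) = ∑_{∅≠I⊆{0,…,n}} (−1)^{n+1−#I} ∫_{∑_{i∈I} Q_i} (⊞_{i∈I} h_i) dμ. Then lim_{j→∞} MI_μ(g_{0,j},…,g_{n,j}) = MI_μ(g₀,…,g_n). -/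
open scoped BigOperators
open MeasureTheory Filter

noncomputable section

variable {n : ℕ}

/-- The Minkowski sum `∑_{i ∈ I} Q i` of a family of subsets of `ℝⁿ`. -/
def minkowskiSum (Q : Fin (n + 1) → Set (Fin n → ℝ)) (I : Finset (Fin (n + 1))) :
    Set (Fin n → ℝ) :=
  {x | ∃ y : Fin (n + 1) → (Fin n → ℝ), (∀ i ∈ I, y i ∈ Q i) ∧ ∑ i ∈ I, y i = x}

/-- The sup-convolution `⊞_{i ∈ I} h i` on the Minkowski sum `∑_{i ∈ I} Q i`:
`x ↦ sup { ∑_{i ∈ I} h i (y i) : y i ∈ Q i, ∑_{i ∈ I} y i = x }`. -/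
def supConvOn (Q : Fin (n + 1) → Set (Fin n → ℝ))
    (h : Fin (n + 1) → (Fin n → ℝ) → ℝ) (I : Finset (Fin (n + 1)))
    (x : Fin n → ℝ) : ℝ :=
  sSup {s : ℝ | ∃ y : Fin (n + 1) → (Fin n → ℝ),
    (∀ i ∈ I, y i ∈ Q i) ∧ (∑ i ∈ I, y i = x) ∧ s = ∑ i ∈ I, h i (y i)}

/-- The mixed integral
`MI_μ(h₀,…,h_n) = ∑_{∅ ≠ I ⊆ {0,…,n}} (−1)^{n+1−#I} ∫_{∑_{i∈I} Q i} ⊞_{i∈I} h i dμ`. -/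
def mixedIntegral (μ : Measure (Fin n → ℝ)) (Q : Fin (n + 1) → Set (Fin n → ℝ))
    (h : Fin (n + 1) → (Fin n → ℝ) → ℝ) : ℝ :=
  ∑ I ∈ Finset.univ.powerset.filter (fun I : Finset (Fin (n + 1)) => I.Nonempty),
    (-1 : ℝ) ^ (n + 1 - I.card) * ∫ x in minkowskiSum Q I, supConvOn Q h I x ∂μ


/-!
Each integral in the mixed integral converges separately. The sup-convolution is `1`-Lipschitz
in each argument for the sup-norm, so `⊞_{i∈I} g_{i,j} → ⊞_{i∈I} g_i` uniformly on the compact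
set `∑_{i∈I} Q_i`, and uniform convergence on a set of finite measure passes to the integral.
The only delicate point is measurability: the sup-convolution of concave functions is concave,
hence continuous on the interior of the convex set `∑_{i∈I} Q_i`, whose frontier is Haar-null.
-/

open scoped Topology Pointwise
open Set

theorem TendstoUniformlyOn.tendsto_setIntegral {ι α E : Type*} [MeasurableSpace α]
    [NormedAddCommGroup E] [NormedSpace ℝ E] {μ : Measure α} {s : Set α} {l : Filter ι}
    [l.IsCountablyGenerated] {F : ι → α → E} {f : α → E}
    (h : TendstoUniformlyOn F f l s) (hs : MeasurableSet s) (hμs : μ s ≠ ⊤)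
    (hf : BddAbove ((‖f ·‖) '' s)) (hF : ∀ᶠ i in l, AEStronglyMeasurable (F i) (μ.restrict s)) :
    Tendsto (fun i ↦ ∫ x in s, F i x ∂μ) l (𝓝 (∫ x in s, f x ∂μ)) := by
  obtain ⟨C, hC⟩ := hf
  refine tendsto_integral_filter_of_dominated_convergence (fun _ ↦ C + 1) hF ?_
    (integrableOn_const hμs) (ae_restrict_of_forall_mem hs fun x hx ↦ h.tendsto_at hx)
  have hF_le := (uniformContinuous_norm.comp_tendstoUniformlyOn h).eventually_forall_le
    (lt_add_one C) (by simpa [upperBounds] using hC)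
  exact hF_le.mono fun i hi ↦ ae_restrict_of_forall_mem hs hi

theorem ConcaveOn.aestronglyMeasurable_restrict {E : Type*} [NormedAddCommGroup E]
    [NormedSpace ℝ E] [MeasurableSpace E] [BorelSpace E] [FiniteDimensional ℝ E]
    (μ : Measure E) [μ.IsAddHaarMeasure] {s : Set E} {f : E → ℝ} (hf : ConcaveOn ℝ s f) :
    AEStronglyMeasurable f (μ.restrict s) := by
  rw [← Measure.restrict_congr_set (interior_ae_eq_of_null_frontier (hf.1.addHaar_frontier μ))]
  exact hf.continuousOn_interior.aestronglyMeasurable measurableSet_interior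

section SupConvolution

variable {Q : Fin (n + 1) → Set (Fin n → ℝ)} {h h₁ h₂ : Fin (n + 1) → (Fin n → ℝ) → ℝ}
  {I : Finset (Fin (n + 1))} {x : Fin n → ℝ}

theorem minkowskiSum_eq_sum : minkowskiSum Q I = ∑ i ∈ I, Q i := by
  ext x
  simp only [minkowskiSum, mem_ofPred_eq, mem_finsetSum]
  exact ⟨fun ⟨y, hy, hyx⟩ ↦ ⟨y, fun hi ↦ hy _ hi, hyx⟩,
    fun ⟨y, hy, hyx⟩ ↦ ⟨y, fun _ hi ↦ hy hi, hyx⟩⟩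

theorem isCompact_minkowskiSum (hQ : ∀ i ∈ I, IsCompact (Q i)) :
    IsCompact (minkowskiSum Q I) := by
  classical
  rw [minkowskiSum_eq_sum]
  induction I using Finset.induction_on with
  | empty => simp
  | insert i I hi ih =>
    rw [Finset.sum_insert hi]
    exact (hQ i (Finset.mem_insert_self i I)).add
      (ih fun j hj ↦ hQ j (Finset.mem_insert_of_mem hj))

theorem convex_minkowskiSum (hQ : ∀ i ∈ I, Convex ℝ (Q i)) :
    Convex ℝ (minkowskiSum Q I) :=
  minkowskiSum_eq_sum (Q := Q) ▸ convex_sum Q hQ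

variable (Q h I x) in
def supConvValues : Set ℝ :=
  {s | ∃ y : Fin (n + 1) → Fin n → ℝ, (∀ i ∈ I, y i ∈ Q i) ∧ ∑ i ∈ I, y i = x ∧
    s = ∑ i ∈ I, h i (y i)}

theorem supConvOn_eq_sSup : supConvOn Q h I x = sSup (supConvValues Q h I x) := rfl

theorem supConvValues_nonempty (hx : x ∈ minkowskiSum Q I) :
    (supConvValues Q h I x).Nonempty := by
  obtain ⟨y, hy, hyx⟩ := hx
  exact ⟨_, y, hy, hyx, rfl⟩

theorem bddAbove_supConvValues (hh : ∀ i ∈ I, BddAbove (h i '' Q i)) :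
    BddAbove (supConvValues Q h I x) := by
  refine ⟨∑ i ∈ I, sSup (h i '' Q i), ?_⟩
  rintro _ ⟨y, hy, -, rfl⟩
  exact Finset.sum_le_sum fun i hi ↦ le_csSup (hh i hi) (mem_image_of_mem _ (hy i hi))

theorem supConvOn_le_add {ε : Fin (n + 1) → ℝ} (hh₂ : ∀ i ∈ I, BddAbove (h₂ i '' Q i))
    (hle : ∀ i ∈ I, ∀ z ∈ Q i, h₁ i z ≤ h₂ i z + ε i) (hx : x ∈ minkowskiSum Q I) :
    supConvOn Q h₁ I x ≤ supConvOn Q h₂ I x + ∑ i ∈ I, ε i := by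
  refine csSup_le (supConvValues_nonempty hx) ?_
  rintro _ ⟨y, hy, hyx, rfl⟩
  calc ∑ i ∈ I, h₁ i (y i) ≤ ∑ i ∈ I, h₂ i (y i) + ∑ i ∈ I, ε i := by
        rw [← Finset.sum_add_distrib]
        exact Finset.sum_le_sum fun i hi ↦ hle i hi _ (hy i hi)
    _ ≤ supConvOn Q h₂ I x + ∑ i ∈ I, ε i :=
        add_le_add_left (le_csSup (bddAbove_supConvValues hh₂) ⟨y, hy, hyx, rfl⟩) _

theorem abs_supConvOn_sub_le {ε : Fin (n + 1) → ℝ} (hh₂ : ∀ i ∈ I, BddAbove (h₂ i '' Q i))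
    (hd : ∀ i ∈ I, ∀ z ∈ Q i, |h₁ i z - h₂ i z| ≤ ε i) (hx : x ∈ minkowskiSum Q I) :
    |supConvOn Q h₁ I x - supConvOn Q h₂ I x| ≤ ∑ i ∈ I, ε i := by
  have hle₁ : ∀ i ∈ I, ∀ z ∈ Q i, h₁ i z ≤ h₂ i z + ε i := fun i hi z hz ↦ by
    linarith [(abs_le.1 (hd i hi z hz)).2]
  have hle₂ : ∀ i ∈ I, ∀ z ∈ Q i, h₂ i z ≤ h₁ i z + ε i := fun i hi z hz ↦ by
    linarith [(abs_le.1 (hd i hi z hz)).1]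
  have hh₁ : ∀ i ∈ I, BddAbove (h₁ i '' Q i) := fun i hi ↦ by
    obtain ⟨C, hC⟩ := hh₂ i hi
    refine ⟨C + ε i, ?_⟩
    rintro _ ⟨z, hz, rfl⟩
    linarith [hle₁ i hi z hz, hC (mem_image_of_mem _ hz)]
  rw [abs_sub_le_iff]
  constructor
  · linarith [supConvOn_le_add hh₂ hle₁ hx]
  · linarith [supConvOn_le_add hh₁ hle₂ hx]

theorem supConvOn_zero (hx : x ∈ minkowskiSum Q I) : supConvOn Q 0 I x = 0 := by
  obtain ⟨y, hy, hyx⟩ := hx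
  have hval : supConvValues Q 0 I x = {0} :=
    eq_singleton_iff_unique_mem.2 ⟨⟨y, hy, hyx, by simp⟩, by rintro _ ⟨_, -, -, rfl⟩; simp⟩
  rw [supConvOn_eq_sSup, hval, csSup_singleton]

theorem abs_supConvOn_le {C : Fin (n + 1) → ℝ} (hC : ∀ i ∈ I, ∀ z ∈ Q i, |h i z| ≤ C i)
    (hx : x ∈ minkowskiSum Q I) : |supConvOn Q h I x| ≤ ∑ i ∈ I, C i := by
  simpa [supConvOn_zero hx] using
    abs_supConvOn_sub_le (h₂ := 0) (fun i _ ↦ ⟨0, by rintro _ ⟨_, _, rfl⟩; rfl⟩)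
      (by simpa using hC) hx

theorem concaveOn_supConvOn (hh : ∀ i ∈ I, ConcaveOn ℝ (Q i) (h i))
    (hbdd : ∀ i ∈ I, BddAbove (h i '' Q i)) :
    ConcaveOn ℝ (minkowskiSum Q I) (supConvOn Q h I) := by
  refine ⟨convex_minkowskiSum fun i hi ↦ (hh i hi).1, ?_⟩
  intro x hx x' hx' a b ha hb hab
  have hA := supConvValues_nonempty (h := h) hx
  have hB := supConvValues_nonempty (h := h) hx'
  have hbA := bddAbove_supConvValues (x := x) hbdd
  have hbB := bddAbove_supConvValues (x := x') hbdd
  -- `a • sSup A + b • sSup B = sSup (a • A + b • B)`, and by concavity of the `h i` every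
  -- element of `a • A + b • B` is dominated by a value at `a • x + b • x'`.
  simp only [supConvOn_eq_sSup]
  rw [← Real.sSup_smul_of_nonneg ha, ← Real.sSup_smul_of_nonneg hb,
    ← csSup_add hA.smul_set (hbA.smul_of_nonneg ha) hB.smul_set (hbB.smul_of_nonneg hb)]
  refine csSup_le (hA.smul_set.add hB.smul_set) ?_
  rintro _ ⟨_, ⟨_, ⟨y, hy, rfl, rfl⟩, rfl⟩, _, ⟨_, ⟨y', hy', rfl, rfl⟩, rfl⟩, rfl⟩
  refine le_trans ?_ (le_csSup (bddAbove_supConvValues hbdd) ⟨a • y + b • y',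
    fun i hi ↦ (hh i hi).1 (hy i hi) (hy' i hi) ha hb hab, by simp [Finset.sum_add_distrib,
      Finset.smul_sum], rfl⟩)
  simp only [smul_eq_mul, Finset.mul_sum, ← Finset.sum_add_distrib]
  exact Finset.sum_le_sum fun i hi ↦ (hh i hi).2 (hy i hi) (hy' i hi) ha hb hab

theorem TendstoUniformlyOn.supConvOn {ι : Type*} {l : Filter ι}
    {H : ι → Fin (n + 1) → (Fin n → ℝ) → ℝ} (hh : ∀ i ∈ I, BddAbove (h i '' Q i))
    (hH : ∀ i ∈ I, TendstoUniformlyOn (fun j ↦ H j i) (h i) l (Q i)) :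
    TendstoUniformlyOn (fun j ↦ supConvOn Q (H j) I) (supConvOn Q h I) l (minkowskiSum Q I) := by
  rw [Metric.tendstoUniformlyOn_iff]
  intro ε hε
  set δ := ε / (I.card + 1)
  have hδ : 0 < δ := by positivity
  have hIδ : I.card * δ < ε := by
    rw [mul_div_assoc', div_lt_iff₀ (by positivity)]
    linarith
  filter_upwards [(Finset.eventually_all I).2 fun i hi ↦
    Metric.tendstoUniformlyOn_iff.1 (hH i hi) δ hδ] with j hj x hx
  have hd : ∀ i ∈ I, ∀ z ∈ Q i, |H j i z - h i z| ≤ δ := fun i hi z hz ↦ by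
    rw [abs_sub_comm]
    simpa [Real.dist_eq] using (hj i hi z hz).le
  rw [dist_comm, Real.dist_eq]
  calc _ ≤ ∑ i ∈ I, δ := abs_supConvOn_sub_le hh hd hx
    _ < ε := by simpa using hIδ

end SupConvolution

theorem mixedIntegral_tendsto_of_tendstoUniformlyOn_general
    (n : ℕ) (μ : Measure (Fin n → ℝ)) [μ.IsAddHaarMeasure]
    (Q : Fin (n + 1) → Set (Fin n → ℝ))
    (hQcomp : ∀ i, IsCompact (Q i))
    (gseq : ℕ → Fin (n + 1) → (Fin n → ℝ) → ℝ) (g : Fin (n + 1) → (Fin n → ℝ) → ℝ)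
    (hseqconc : ∀ j i, ConcaveOn ℝ (Q i) (gseq j i))
    (hseqcont : ∀ j i, ContinuousOn (gseq j i) (Q i))
    (hunif : ∀ i, TendstoUniformlyOn (fun j => gseq j i) (g i) atTop (Q i)) :
    Tendsto (fun j => mixedIntegral μ Q (gseq j)) atTop
      (nhds (mixedIntegral μ Q g)) := by
  refine tendsto_finsetSum _ fun I _ ↦ Tendsto.const_mul _ ?_
  have hgcont : ∀ i, ContinuousOn (g i) (Q i) := fun i ↦
    (hunif i).continuousOn (.of_forall fun j ↦ hseqcont j i)
  choose C hC using fun i ↦ (hQcomp i).exists_bound_of_continuousOn (hgcont i)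
  have hS := isCompact_minkowskiSum (I := I) fun i _ ↦ hQcomp i
  refine (TendstoUniformlyOn.supConvOn (fun i _ ↦ (hQcomp i).bddAbove_image (hgcont i))
    fun i _ ↦ hunif i).tendsto_setIntegral hS.measurableSet hS.measure_lt_top.ne
    ⟨∑ i ∈ I, C i, ?_⟩ (.of_forall fun j ↦ ?_)
  · rintro _ ⟨x, hx, rfl⟩
    exact abs_supConvOn_le (fun i _ ↦ hC i) hx
  · exact (concaveOn_supConvOn (fun i _ ↦ hseqconc j i)
      fun i _ ↦ (hQcomp i).bddAbove_image (hseqcont j i)).aestronglyMeasurable_restrict μ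

/-- The mixed integral of `n+1` concave functions on nonempty
compact convex bodies of `ℝⁿ`, with respect to an additive Haar measure, is
continuous under uniform convergence of its concave arguments. -/
theorem mixedIntegral_tendsto_of_tendstoUniformlyOn
    (n : ℕ) (μ : Measure (Fin n → ℝ)) [μ.IsAddHaarMeasure]
    (Q : Fin (n + 1) → Set (Fin n → ℝ))
    (hQne : ∀ i, (Q i).Nonempty) (hQcomp : ∀ i, IsCompact (Q i))
    (hQconv : ∀ i, Convex ℝ (Q i))
    (gseq : ℕ → Fin (n + 1) → (Fin n → ℝ) → ℝ) (g : Fin (n + 1) → (Fin n → ℝ) → ℝ)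
    (hseqconc : ∀ j i, ConcaveOn ℝ (Q i) (gseq j i))
    (hseqcont : ∀ j i, ContinuousOn (gseq j i) (Q i))
    (hgconc : ∀ i, ConcaveOn ℝ (Q i) (g i))
    (hunif : ∀ i, TendstoUniformlyOn (fun j => gseq j i) (g i) atTop (Q i)) :
    Tendsto (fun j => mixedIntegral μ Q (gseq j)) atTop
      (nhds (mixedIntegral μ Q g)) :=
  mixedIntegral_tendsto_of_tendstoUniformlyOn_general n μ Q hQcomp gseq g hseqconc hseqcont hunif
end
end

section
/- Let K be a field, d ≥ 1 an integer, and u, w ∈ Kˣ with u^d = 1 and w^d = 1. Then there exists a pair of integers (a, b) ≠ (0, 0) with a² + b² ≤ 16·d such that u^a · w^b = 1. -/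
/-!
Among the `(n + 1)²` products `uⁱ wʲ` with `0 ≤ i, j ≤ n` and `n = ⌊√d⌋`, all of which are
`d`-th roots of unity, two coincide because a field has at most `d < (n + 1)²` of them.
Their quotient is a relation `uᵃ wᵇ = 1` with `|a|, |b| ≤ n`, so `a² + b² ≤ 2d`.
-/

theorem Subgroup.exists_zpow_mul_zpow_eq_one_of_card_lt {G : Type*} [CommGroup G]
    {H : Subgroup G} [Finite H] {u w : G} (hu : u ∈ H) (hw : w ∈ H) {n : ℕ}
    (hcard : Nat.card H < (n + 1) ^ 2) :
    ∃ a b : ℤ, ¬(a = 0 ∧ b = 0) ∧ |a| ≤ n ∧ |b| ≤ n ∧ u ^ a * w ^ b = 1 := by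
  let f : Fin (n + 1) × Fin (n + 1) → H := fun p =>
    ⟨u ^ (p.1 : ℕ) * w ^ (p.2 : ℕ), H.mul_mem (H.pow_mem hu _) (H.pow_mem hw _)⟩
  have hf : ¬Function.Injective f := fun hinj =>
    (Nat.card_le_card_of_injective f hinj).not_gt (by simpa [sq] using hcard)
  obtain ⟨⟨⟨i, hi⟩, ⟨j, hj⟩⟩, ⟨⟨k, hk⟩, ⟨l, hl⟩⟩, hfeq, hne⟩ := Function.not_injective_iff.mp hf
  have heq : u ^ (i : ℤ) * w ^ (j : ℤ) = u ^ (k : ℤ) * w ^ (l : ℤ) := by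
    simpa [f] using congrArg Subtype.val hfeq
  refine ⟨(i : ℤ) - k, (j : ℤ) - l, ?_, ?_, ?_, ?_⟩
  · rintro ⟨hik, hjl⟩
    exact hne (by ext <;> simp <;> omega)
  · rw [abs_le]; omega
  · rw [abs_le]; omega
  · rw [zpow_sub, zpow_sub, mul_mul_mul_comm, heq, ← mul_inv, mul_inv_cancel]

/-- Given two `d`-th roots of unity `u`, `w` in a field, there
is a nonzero integer pair `(a, b)` with `a² + b² ≤ 16·d` and `uᵃ wᵇ = 1`. -/
theorem exists_small_multiplicative_relation_of_roots_of_unity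
    (K : Type*) [Field K] (d : ℕ) (hd : 1 ≤ d) (u w : Kˣ)
    (hu : u ^ d = 1) (hw : w ^ d = 1) :
    ∃ a b : ℤ, ¬(a = 0 ∧ b = 0) ∧ a ^ 2 + b ^ 2 ≤ 16 * (d : ℤ) ∧
      u ^ a * w ^ b = 1 := by
  -- `rootsOfUnity 0 K` is all of `Kˣ`, so the cardinality bound needs `d ≠ 0`.
  have : NeZero d := ⟨by omega⟩
  have hcard : Nat.card (rootsOfUnity d K) < (Nat.sqrt d + 1) ^ 2 :=
    (card_rootsOfUnity K d).trans_lt (Nat.lt_succ_sqrt' d)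
  obtain ⟨a, b, hab, ha, hb, hrel⟩ :=
    Subgroup.exists_zpow_mul_zpow_eq_one_of_card_lt (H := rootsOfUnity d K) hu hw hcard
  have hsqrt : (Nat.sqrt d : ℤ) ^ 2 ≤ d := by exact_mod_cast Nat.sqrt_le' d
  have ha2 : a ^ 2 ≤ (Nat.sqrt d : ℤ) ^ 2 := sq_le_sq' (abs_le.mp ha).1 (abs_le.mp ha).2
  have hb2 : b ^ 2 ≤ (Nat.sqrt d : ℤ) ^ 2 := sq_le_sq' (abs_le.mp hb).1 (abs_le.mp hb).2
  exact ⟨a, b, hab, by omega, hrel⟩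
end
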